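/- Let M ≥ 4 be an even integer. Let S^(0) ∈ ℝ^{M×M} be the matrix obtained from the modified DST matrix S by replacing its row of index 1 with the vector v ∈ ℝ^M with entries v_n = (1/√M)·(−1)^n. Then rank(S^(0)) = M, i.e., S^(0) is invertible. -/

import Mathlib

/-!
The sine vectors `s_k n = sin (π k (n + 1/2) / M)`, `1 ≤ k ≤ M`, are pairwise orthogonal, and
`s_M n = (-1)ⁿ`. So every row of `S^(0)` except row 0 is a nonzero multiple of some `s_k`
with `k ≠ 1`, and the constant row 0 pairs positively with `s_1`. Pairing the rows of `S^(0)`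
with `s_1, s_M, s_2, …, s_{M-1}` therefore gives an upper triangular matrix with nonzero
diagonal.
-/

/-- The modified DST matrix `S ∈ ℝ^{M×M}` (row 0 replaced by the constant row `√(1/M)`). -/
noncomputable def modDstMat (M : ℕ) : Matrix (Fin M) (Fin M) ℝ :=
  Matrix.of fun k n =>
    if (k : ℕ) = 0 then Real.sqrt (1 / M)
    else Real.sqrt (2 / M) * Real.sin (Real.pi / M * (k : ℕ) * ((n : ℕ) + 1 / 2))

open Real Matrix Finset

theorem Matrix.det_ne_zero_of_isUpperTriangular_mul {n R : Type*} [Fintype n] [LinearOrder n]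
    [CommRing R] [IsDomain R] (A W : Matrix n n R) (hT : (A * W).IsUpperTriangular)
    (hdiag : ∀ i, (A * W) i i ≠ 0) : A.det ≠ 0 := by
  have h : (A * W).det ≠ 0 := by
    rw [det_of_isUpperTriangular hT]
    exact prod_ne_zero_iff.mpr fun i _ => hdiag i
  rw [det_mul] at h
  exact left_ne_zero_of_mul h

lemma sum_cos_pi_div_mul_add_half_eq_zero {M : ℕ} {m : ℤ} (hm : m ≠ 0) (hmM : |m| < 2 * M) :
    ∑ n : Fin M, cos (π / M * m * ((n : ℕ) + 1 / 2)) = 0 := by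
  have hM : (0 : ℝ) < M := by
    have := abs_pos.mpr hm
    exact_mod_cast (by omega : 0 < M)
  have hmM' : |(m : ℝ)| < 2 * M := by exact_mod_cast hmM
  set a := π / M * m with ha
  have hsin : sin (a / 2) ≠ 0 := by
    have hbound : |a / 2| < π := by
      rw [ha, abs_div, abs_mul, abs_div, abs_of_pos pi_pos, abs_of_pos hM, abs_two]
      rw [div_lt_iff₀ two_pos, div_mul_eq_mul_div, div_lt_iff₀ hM]
      nlinarith [pi_pos]
    rw [Ne, sin_eq_zero_iff_of_lt_of_lt (by linarith [neg_abs_le (a / 2)])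
      (lt_of_le_of_lt (le_abs_self _) hbound)]
    have : (m : ℝ) ≠ 0 := by exact_mod_cast hm
    positivity
  refine (mul_eq_zero.mp ?_).resolve_left hsin
  -- `sin (a / 2) * ∑ = sin (M a / 2) cos (M a / 2) = sin (m π) / 2`
  rw [Fin.sum_univ_eq_sum_range (fun n => cos (a * ((n : ℝ) + 1 / 2)))]
  simp_rw [mul_add, mul_one_div]
  rw [sin_mul_sum_cos, show ((M : ℝ) - 1) * a / 2 + a / 2 = M * a / 2 by ring]
  have hMa : M * a / 2 * 2 = m * π := by rw [ha]; field_simp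
  have := sin_two_mul (M * a / 2)
  rw [mul_comm 2, hMa, sin_int_mul_pi] at this
  linarith

noncomputable def dstSinRow (M k : ℕ) : Fin M → ℝ :=
  fun n => sin (π / M * k * ((n : ℕ) + 1 / 2))

lemma dstSinRow_dotProduct_of_ne {M k l : ℕ} (hkl : k ≠ l) (hklM : k + l < 2 * M) :
    dstSinRow M k ⬝ᵥ dstSinRow M l = 0 := by
  have hprod : ∀ n : Fin M, dstSinRow M k n * dstSinRow M l n =
      (cos (π / M * ((k - l : ℤ) : ℝ) * ((n : ℕ) + 1 / 2)) -
        cos (π / M * ((k + l : ℤ) : ℝ) * ((n : ℕ) + 1 / 2))) / 2 := by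
    intro n
    rw [dstSinRow, dstSinRow, eq_div_iff two_ne_zero, mul_comm _ (2 : ℝ), ← mul_assoc,
      two_mul_sin_mul_sin]
    push_cast
    ring_nf
  rw [dotProduct, sum_congr rfl fun n _ => hprod n, ← sum_div, sum_sub_distrib,
    sum_cos_pi_div_mul_add_half_eq_zero (by omega) (by rw [abs_lt]; omega),
    sum_cos_pi_div_mul_add_half_eq_zero (by omega) (by rw [abs_lt]; omega), sub_zero, zero_div]

lemma dstSinRow_pos {M k : ℕ} (n : Fin M) (hk : 0 < k) (hkn : k * (2 * n + 1) < 2 * M) :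
    0 < dstSinRow M k n := by
  have hM : (0 : ℝ) < M := by exact_mod_cast n.pos
  have hkn' : (k : ℝ) * (2 * n + 1) < 2 * M := by exact_mod_cast hkn
  apply sin_pos_of_pos_of_lt_pi
  · have : (0 : ℝ) < k := by exact_mod_cast hk
    positivity
  · rw [div_mul_eq_mul_div, div_mul_eq_mul_div, div_lt_iff₀ hM]
    nlinarith [pi_pos]

lemma dstSinRow_dotProduct_self_ne_zero {M k : ℕ} (hk : 0 < k) (hkM : k < 2 * M) :
    dstSinRow M k ⬝ᵥ dstSinRow M k ≠ 0 := by
  rw [Ne, dotProduct_self_eq_zero]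
  intro h
  have := dstSinRow_pos (⟨0, by omega⟩ : Fin M) hk (by simpa using hkM)
  rw [h] at this
  exact lt_irrefl 0 this

lemma dstSinRow_self {M : ℕ} (n : Fin M) : dstSinRow M M n = (-1) ^ (n : ℕ) := by
  have hM : (M : ℝ) ≠ 0 := by exact_mod_cast n.pos.ne'
  rw [dstSinRow, show π / M * M * ((n : ℕ) + 1 / 2) = (n : ℕ) * π + π / 2 by field_simp,
    sin_add_pi_div_two, cos_nat_mul_pi]

def dstDualIndex (M : ℕ) (i : Fin M) : ℕ :=
  if (i : ℕ) = 0 then 1 else if (i : ℕ) = 1 then M else i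

lemma dstDualIndex_pos {M : ℕ} (i : Fin M) : 0 < dstDualIndex M i := by
  unfold dstDualIndex; split_ifs <;> omega

lemma dstDualIndex_le {M : ℕ} (i : Fin M) : dstDualIndex M i ≤ M := by
  unfold dstDualIndex; split_ifs <;> omega

lemma dstDualIndex_injective (M : ℕ) : Function.Injective (dstDualIndex M) := by
  intro i j h
  have hi := i.isLt
  have hj := j.isLt
  unfold dstDualIndex at h
  ext
  split_ifs at h <;> omega

noncomputable def dstDualMat (M : ℕ) : Matrix (Fin M) (Fin M) ℝ :=
  of fun n j => dstSinRow M (dstDualIndex M j) n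

noncomputable def dstRowReplaced (M : ℕ) (hM : 1 < M) : Matrix (Fin M) (Fin M) ℝ :=
  (modDstMat M).updateRow ⟨1, hM⟩ (fun n => 1 / Real.sqrt M * (-1 : ℝ) ^ (n : ℕ))

lemma dstRowReplaced_zero {M : ℕ} (hM : 1 < M) :
    dstRowReplaced M hM ⟨0, by omega⟩ = fun _ => √(1 / M) := by
  ext n
  simp [dstRowReplaced, updateRow_apply, modDstMat]

lemma dstRowReplaced_eq_smul {M : ℕ} (hM : 1 < M) {i : Fin M} (hi : (i : ℕ) ≠ 0) :
    ∃ c : ℝ, c ≠ 0 ∧ dstRowReplaced M hM i = c • dstSinRow M (dstDualIndex M i) := by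
  have hMpos : (0 : ℝ) < M := by exact_mod_cast (by omega : 0 < M)
  by_cases hi1 : (i : ℕ) = 1
  · refine ⟨1 / √M, by positivity, ?_⟩
    obtain rfl : i = ⟨1, hM⟩ := Fin.ext hi1
    ext n
    simp [dstRowReplaced, dstDualIndex, dstSinRow_self]
  · refine ⟨√(2 / M), by positivity, ?_⟩
    ext n
    have : i ≠ ⟨1, hM⟩ := fun h => hi1 (by rw [h])
    simp [dstRowReplaced, updateRow_apply, this, modDstMat, hi, hi1, dstDualIndex, dstSinRow]

lemma dstRowReplaced_mul_dstDualMat_isUpperTriangular {M : ℕ} (hM : 1 < M) :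
    (dstRowReplaced M hM * dstDualMat M).IsUpperTriangular := by
  intro i j hji
  obtain ⟨c, -, hc⟩ := dstRowReplaced_eq_smul hM (i := i) (Nat.ne_zero_of_lt (Fin.lt_def.mp hji))
  have hne : dstDualIndex M i ≠ dstDualIndex M j := (dstDualIndex_injective M).ne hji.ne'
  rw [mul_apply', hc, smul_dotProduct]
  refine smul_eq_zero_of_right c (dstSinRow_dotProduct_of_ne hne ?_)
  have := dstDualIndex_le i
  have := dstDualIndex_le j
  omega

lemma dstRowReplaced_mul_dstDualMat_diag_ne_zero {M : ℕ} (hM : 1 < M) (i : Fin M) :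
    (dstRowReplaced M hM * dstDualMat M) i i ≠ 0 := by
  rw [mul_apply']
  by_cases hi : (i : ℕ) = 0
  · obtain rfl : i = ⟨0, Nat.zero_lt_of_lt hM⟩ := Fin.ext hi
    rw [dstRowReplaced_zero, show (fun j => dstDualMat M j ⟨0, _⟩) = dstSinRow M 1 from rfl]
    refine (sum_pos (fun n _ => mul_pos (by positivity) ?_) ⟨_, mem_univ ⟨0, by omega⟩⟩).ne'
    exact dstSinRow_pos n one_pos (by omega)
  · obtain ⟨c, hc0, hc⟩ := dstRowReplaced_eq_smul hM hi
    rw [hc, smul_dotProduct, smul_eq_mul]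
    exact mul_ne_zero hc0 (dstSinRow_dotProduct_self_ne_zero (dstDualIndex_pos i)
      (by have := dstDualIndex_le i; omega))

/-- Section V-A: replacing row 1 of `S` by the alternating vector
`v_n = (1/√M)·(−1)ⁿ` yields a full-rank (invertible) matrix `S^(0)`. -/
theorem modDst_replacedRowOne_fullRank (M : ℕ) (hM : 4 ≤ M) :
    ((modDstMat M).updateRow ⟨1, by omega⟩
        (fun n => 1 / Real.sqrt M * (-1 : ℝ) ^ (n : ℕ))).rank = M := by
  have hM1 : 1 < M := by omega
  change (dstRowReplaced M hM1).rank = M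
  have hdet := det_ne_zero_of_isUpperTriangular_mul _ _
    (dstRowReplaced_mul_dstDualMat_isUpperTriangular hM1)
    (dstRowReplaced_mul_dstDualMat_diag_ne_zero hM1)
  rw [rank_of_isUnit _ ((isUnit_iff_isUnit_det _).mpr hdet.isUnit), Fintype.card_fin]
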